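/- Let K be a field, n invertible in K, μ_n the group of n-th roots of unity in a separable closure. The cup product pairing H^1(K, A[n]) × A'[n](K) → H^1(K, μ_n) induced by the Weil pairing A[n] × A'[n] → μ_n, evaluated on the class of an extension η_n: 0 → A[n] → E[n] → ℤ/nℤ → 0 and a point a ∈ A'[n](K), equals the image of a under the boundary map ∂: A'[n](K) → H^1(K, μ_n) of the Cartier-dual sequence 0 → μ_n → E[n]^D → A'[n] → 0. -/
import Mathlib


/-- cocycle-level formulation: Let `G = Gal(K^sep/K)`, let `M = A[n]`,
`N = A'[n]`, `P = μₙ` be `G`-modules, and `w : M → N → P` the (bi-additive,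
`G`-equivariant) Weil pairing.  Let `0 → M →[ι] E → ℤ/nℤ → 0` be the extension `η_n`,
with `e ∈ E` lying over `1`, so that the class of `η_n` in `H¹(K, A[n])` is represented
by the 1-cocycle `c : G → M`, `g • e = e + ι (c g)`.  Let `a ∈ A'[n](K)` be a
`G`-invariant point, and let `φ ∈ E^D = Hom(E, 𝔾ₘ)` be a lift of `a` along the
Cartier-dual sequence `0 → μₙ → E^D → A'[n] → 0`, i.e. `φ : E → P` additive with
`φ(ι m) = w(m, a)` for all `m`.  Then the cup product cocycle `g ↦ w(c g, a)`
representing `⟨η_n, a⟩` is cohomologous (up to sign conventions) to the boundary cocycle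
`g ↦ (g • φ)(e) − φ(e) = g • φ(g⁻¹ • e) − φ(e)` representing `∂(a)`:
there is `p ∈ P` with `w(c g, a) = (g • p − p) − (g • φ(g⁻¹ • e) − φ(e))` for all `g`,
i.e. `⟨η_n, a⟩ = ∂(a)` in `H¹(K, μₙ)`. -/
theorem stmt_17 {G : Type*} [Group G] {M N P E : Type*}
    [AddCommGroup M] [AddCommGroup N] [AddCommGroup P] [AddCommGroup E]
    [DistribMulAction G M] [DistribMulAction G N] [DistribMulAction G P]
    [DistribMulAction G E]
    (w : M →+ N →+ P)
    (hw : ∀ (g : G) (m : M) (x : N), g • (w m x) = w (g • m) (g • x))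
    (ι : M →+ E) (hιinj : Function.Injective ι)
    (hιequiv : ∀ (g : G) (m : M), ι (g • m) = g • ι m)
    (a : N) (ha : ∀ g : G, g • a = a)
    (φ : E →+ P) (hφ : ∀ m : M, φ (ι m) = w m a)
    (e : E) (c : G → M) (hc : ∀ g : G, g • e = e + ι (c g)) :
    ∃ p : P, ∀ g : G, w (c g) a = (g • p - p) - (g • φ (g⁻¹ • e) - φ e) := by
  refine ⟨φ e, fun g => ?_⟩
  have hkey : g • c g⁻¹ = - c g := by
    apply hιinj
    have h1 : g • (g⁻¹ • e) = e := by simp [smul_smul]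
    have h2 : g • (g⁻¹ • e) = e + ι (c g) + ι (g • c g⁻¹) := by
      rw [hc g⁻¹, smul_add, hc g, ← hιequiv]
    rw [h1] at h2
    have := h2.symm
    rw [map_neg]
    abel_nf
    abel_nf at this
    linear_combination (norm := abel) this
  have h3 : φ (g⁻¹ • e) = φ e + w (c g⁻¹) a := by
    rw [hc g⁻¹, map_add, hφ]
  rw [h3, smul_add, ← ha g, hw, ha, ha, hkey, map_neg]
  simp [AddMonoidHom.neg_apply]
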